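/- Let ε > 0 and a ≠ b be real numbers. Let h : ℍ → ℂ be an injective holomorphic map extending continuously to ℍ ∪ (−ε,ε) with h(0) = z₀, and let t : ℍ → ℝ be a bounded harmonic function extending continuously to ℍ ∪ (−ε,0) ∪ (0,ε) with t ≡ a on (−ε,0) and t ≡ b on (0,ε). Set X = (h,t) : ℍ → ℂ × ℝ. Then for every θ ∈ (0,π), the limit of X(r e^{iθ}) as r ↓ 0 exists and equals (z₀, a·(θ/π) + b·(1 − θ/π)); consequently the cluster set C(X, 0) := { p ∈ ℂ × ℝ : there exist wₙ ∈ ℍ with wₙ → 0 and X(wₙ) → p } equals the isotropic line segment L = {z₀} × [min(a,b), max(a,b)]. -/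

import Mathlib

open Complex Set Function Filter Topology

/-- The open upper half-plane in `ℂ`. -/
def UHP : Set ℂ := {w : ℂ | 0 < w.im}

/-- A real-valued function on `ℂ ≅ ℝ²` is harmonic on a set if it is `C²` there and its
Laplacian `f_xx + f_yy` vanishes at every point of the set. -/
def HarmonicOn (f : ℂ → ℝ) (s : Set ℂ) : Prop :=
  ContDiffOn ℝ 2 f s ∧
    ∀ z ∈ s, fderiv ℝ (fun w => fderiv ℝ f w 1) z 1 +
      fderiv ℝ (fun w => fderiv ℝ f w Complex.I) z Complex.I = 0

/-!
Let `stepHarmonic a b w = a · arg w / π + b · (1 - arg w / π)`, the harmonic function on `ℍ` with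
boundary values `b` on `(0, ∞)` and `a` on `(-∞, 0)`. The difference `u = t - stepHarmonic a b` is
bounded and harmonic on `ℍ`, continuous up to `(-ε, 0) ∪ (0, ε)` and zero there. On a thin box
`(-R, R) × (0, H)` the barrier `δ + M · Im w / H` dominates `|u|` on the whole boundary except at
`0`; Lindelöf's maximum principle (a bounded harmonic function may ignore one boundary point, as the
barrier `η log |w|` shows when `η → 0`) gives `|u| ≤ δ + M · Im w / H` inside, so `u → 0` at `0`.
Hence `t(r e^{iθ})` tends to `stepHarmonic a b (e^{iθ})`, and since a cluster set is closed and
`stepHarmonic a b` takes values in `[min a b, max a b]`, the cluster set is the whole segment.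
-/

open InnerProductSpace
open scoped Real

theorem MapClusterPt.exists_seq_of_nhdsWithin {α β : Type*} [TopologicalSpace α]
    [FirstCountableTopology α] [TopologicalSpace β] [FirstCountableTopology β] {X : α → β}
    {s : Set α} {x : α} {p : β}
    (h : MapClusterPt p (𝓝[s] x) X) :
    ∃ u : ℕ → α, (∀ n, u n ∈ s) ∧ Tendsto u atTop (𝓝 x) ∧ Tendsto (X ∘ u) atTop (𝓝 p) := by
  obtain ⟨ψ, hX, hψ⟩ := h.exists_seq_tendsto
  obtain ⟨hψx, hψs⟩ := tendsto_nhdsWithin_iff.1 hψ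
  obtain ⟨N, hN⟩ := eventually_atTop.1 hψs
  exact ⟨fun n => ψ (n + N), fun n => hN _ (Nat.le_add_left N n),
    (tendsto_add_atTop_iff_nat N).2 hψx, (tendsto_add_atTop_iff_nat (f := X ∘ ψ) N).2 hX⟩

theorem uIcc_subset_closure_image_Ioo {f : ℝ → ℝ} (hf : Continuous f) {x y : ℝ} (hxy : x < y) :
    uIcc (f x) (f y) ⊆ closure (f '' Ioo x y) := by
  calc uIcc (f x) (f y) ⊆ f '' uIcc x y := intermediate_value_uIcc hf.continuousOn
    _ = f '' closure (Ioo x y) := by rw [uIcc_of_lt hxy, closure_Ioo hxy.ne]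
    _ ⊆ closure (f '' Ioo x y) := image_closure_subset_closure_image hf

theorem closure_Ioo_reProdIm_Ioo {a b c d : ℝ} (hab : a < b) (hcd : c < d) :
    closure (Ioo a b ×ℂ Ioo c d) = Icc a b ×ℂ Icc c d := by
  rw [closure_reProdIm, closure_Ioo hab.ne, closure_Ioo hcd.ne]

theorem frontier_Ioo_reProdIm_Ioo {a b c d : ℝ} (hab : a < b) (hcd : c < d) :
    frontier (Ioo a b ×ℂ Ioo c d) = Icc a b ×ℂ {c, d} ∪ ({a, b} : Set ℝ) ×ℂ Icc c d := by
  rw [frontier_reProdIm, closure_Ioo hab.ne, closure_Ioo hcd.ne, frontier_Ioo hab, frontier_Ioo hcd]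

theorem eq_ofReal_re_of_im_eq_zero {w : ℂ} (h : w.im = 0) : w = w.re :=
  Complex.ext rfl (by simp [h])

theorem mem_Ioo_union_Ioo_of_abs_lt {x ε : ℝ} (hx : x ≠ 0) (hxε : |x| < ε) :
    x ∈ Ioo (-ε) 0 ∪ Ioo 0 ε := by
  rcases hx.lt_or_gt with hx | hx
  · exact Or.inl ⟨by linarith [neg_abs_le x], hx⟩
  · exact Or.inr ⟨hx, by linarith [le_abs_self x]⟩

theorem continuousWithinAt_arg_of_ne_zero {z : ℂ} (hz : z ≠ 0) :
    ContinuousWithinAt arg {w | 0 ≤ w.im} z := by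
  by_cases hzs : z ∈ slitPlane
  · exact (continuousAt_arg hzs).continuousWithinAt
  · rw [mem_slitPlane_iff, not_or, not_lt, not_ne_iff] at hzs
    exact continuousWithinAt_arg_of_re_neg_of_im_zero
      (hzs.1.lt_of_ne fun h => hz (Complex.ext h hzs.2)) hzs.2

theorem HarmonicOn.harmonicOnNhd {f : ℂ → ℝ} {U : Set ℂ} (hU : IsOpen U) (hf : HarmonicOn f U) :
    HarmonicOnNhd f U := by
  intro z hz
  refine ⟨hf.1.contDiffAt (hU.mem_nhds hz), ?_⟩
  filter_upwards [hU.mem_nhds hz] with w hw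
  have hdf : DifferentiableAt ℝ (fderiv ℝ f) w :=
    ((hf.1.contDiffAt (hU.mem_nhds hw)).fderiv_right (m := 1) le_rfl).differentiableAt one_ne_zero
  have hsecond : ∀ v, fderiv ℝ (fun w => fderiv ℝ f w v) w v = fderiv ℝ (fderiv ℝ f) w v v :=
    fun v => by simp [fderiv_clm_apply hdf (differentiableAt_const v)]
  simpa [laplacian_eq_iteratedFDeriv_complexPlane, iteratedFDeriv_two_apply, ← hsecond]
    using hf.2 w hw

theorem InnerProductSpace.HarmonicAt.eventually_eq_of_isLocalMax {f : ℂ → ℝ} {z : ℂ}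
    (hf : HarmonicAt f z) (hmax : IsLocalMax f z) : ∀ᶠ w in 𝓝 z, f w = f z := by
  obtain ⟨r, hr, hball⟩ := Metric.isOpen_iff.1 (isOpen_setOfPred_harmonicAt f) z hf
  obtain ⟨F, hF, hFf⟩ := HarmonicOnNhd.exists_analyticOnNhd_ball_re_eq (f := f) hball
  -- `‖exp F‖ = exp f`, so the maximum modulus principle applies to `exp ∘ F`.
  have hnorm : ∀ᶠ w in 𝓝 z, ‖exp (F w)‖ = Real.exp (f w) := by
    filter_upwards [Metric.ball_mem_nhds z hr] with w hw
    rw [norm_exp]; exact congrArg Real.exp (hFf hw)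
  have hconst := eventually_eq_of_isLocalMax_norm (f := exp ∘ F)
    (by
      filter_upwards [Metric.ball_mem_nhds z hr] with w hw
      exact (hF w hw).differentiableAt.cexp)
    (by
      filter_upwards [hnorm, hmax] with w hw hwmax
      simp only [Function.comp_apply, hw, hnorm.self_of_nhds]
      exact Real.exp_le_exp.2 hwmax)
  filter_upwards [hconst, hnorm] with w hw hwn
  have := congrArg norm hw
  simp only [Function.comp_apply, hwn, hnorm.self_of_nhds] at this
  exact Real.exp_injective this

theorem InnerProductSpace.HarmonicOnNhd.le_of_forall_mem_frontier_le {f : ℂ → ℝ} {Ω : Set ℂ}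
    {C : ℝ} (hb : Bornology.IsBounded Ω) (hf : HarmonicOnNhd f Ω)
    (hc : ContinuousOn f (closure Ω)) (hC : ∀ z ∈ frontier Ω, f z ≤ C) {z : ℂ} (hz : z ∈ Ω) :
    f z ≤ C := by
  have hK : IsCompact (closure Ω) := hb.isCompact_closure
  obtain ⟨z₁, hz₁, hmax⟩ := hK.exists_isMaxOn ⟨z, subset_closure hz⟩ hc
  -- Among the maximum points, one with the largest real part cannot be interior.
  have hS : IsCompact (closure Ω ∩ f ⁻¹' {f z₁}) :=
    hK.of_isClosed_subset (hc.preimage_isClosed_of_isClosed isClosed_closure isClosed_singleton)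
      inter_subset_left
  obtain ⟨z₂, ⟨hz₂, hfz₂⟩, hre⟩ :=
    hS.exists_isMaxOn ⟨z₁, hz₁, rfl⟩ continuous_re.continuousOn
  have hfz₂ : f z₂ = f z₁ := hfz₂
  suffices z₂ ∈ frontier Ω from (hmax (subset_closure hz)).trans (hfz₂ ▸ hC z₂ this)
  by_contra hfr
  have hint : z₂ ∈ interior Ω := by
    rw [← closure_sdiff_frontier]; exact ⟨hz₂, hfr⟩
  have hloc : IsLocalMax f z₂ := by
    filter_upwards [isOpen_interior.mem_nhds hint] with w hw
    exact hfz₂ ▸ hmax (subset_closure (interior_subset hw))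
  have hnear : ∀ᶠ w in 𝓝 z₂, f w = f z₂ ∧ w ∈ interior Ω :=
    ((hf z₂ (interior_subset hint)).eventually_eq_of_isLocalMax hloc).and
      (isOpen_interior.mem_nhds hint)
  have hshift : Tendsto (fun s : ℝ => z₂ + s) (𝓝[>] 0) (𝓝 z₂) :=
    ((continuous_const.add continuous_ofReal).tendsto' 0 z₂ (by simp)).mono_left
      nhdsWithin_le_nhds
  obtain ⟨s, ⟨hfs, hs⟩, hspos⟩ := ((hshift.eventually hnear).and self_mem_nhdsWithin).exists
  have : (z₂ + s).re ≤ z₂.re := hre ⟨subset_closure (interior_subset hs), hfs.trans hfz₂⟩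
  simp only [add_re, ofReal_re, add_le_iff_nonpos_right] at this
  exact absurd hspos this.not_gt

theorem InnerProductSpace.HarmonicOnNhd.add_mul_log_le_of_forall_mem_frontier_le {f : ℂ → ℝ}
    {Ω : Set ℂ} {c : ℂ} {C M L η : ℝ} (hΩ : IsOpen Ω) (hb : Bornology.IsBounded Ω)
    (hf : HarmonicOnNhd f Ω) (hc : ContinuousOn f (closure Ω \ {c})) (hM : ∀ z ∈ Ω, f z ≤ M)
    (hC : ∀ z ∈ frontier Ω, z ≠ c → f z ≤ C) (hL : closure Ω ⊆ Metric.closedBall c L)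
    (hη : 0 < η) {z : ℂ} (hz : z ∈ Ω) (hzc : z ≠ c) :
    f z + η * Real.log ‖z - c‖ ≤ C + η * Real.log L := by
  have hzc' : 0 < ‖z - c‖ := norm_pos_iff.2 (sub_ne_zero.2 hzc)
  -- cut out a disc around `c` so small that `η log ‖w - c‖` beats `M` on its boundary
  set ρ := min (‖z - c‖ / 2) (Real.exp (Real.log L - (M - C) / η))
  have hρ0 : 0 < ρ := lt_min (by positivity) (Real.exp_pos _)
  have hρM : M + η * Real.log ρ ≤ C + η * Real.log L := by
    have := Real.log_le_log hρ0 (min_le_right _ _)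
    rw [Real.log_exp] at this
    have := mul_le_mul_of_nonneg_left this hη.le
    rw [mul_sub, mul_div_cancel₀ _ hη.ne'] at this
    linarith
  set Ω' := Ω ∩ {w | ρ < ‖w - c‖}
  have hΩ' : IsOpen Ω' := hΩ.inter (isOpen_lt continuous_const (by fun_prop))
  have hcl : closure Ω' ⊆ closure Ω ∩ {w | ρ ≤ ‖w - c‖} :=
    closure_minimal (inter_subset_inter subset_closure fun w (hw : ρ < _) => hw.le)
      (isClosed_closure.inter (isClosed_le continuous_const (by fun_prop)))
  have hne : ∀ w ∈ closure Ω', w ≠ c := fun w hw hwc => by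
    have := (hcl hw).2; simp [hwc] at this; linarith
  refine HarmonicOnNhd.le_of_forall_mem_frontier_le (f := fun w => f w + η * Real.log ‖w - c‖)
    (Ω := Ω') (hb.subset inter_subset_left) ?_ ?_ ?_
    ⟨hz, show ρ < ‖z - c‖ from (min_le_left _ _).trans_lt (half_lt_self hzc')⟩
  · intro w hw
    have hwc : w - c ≠ 0 := sub_ne_zero.2 (hne w (subset_closure hw))
    exact (hf w hw.1).add
      (((analyticAt_id.sub analyticAt_const).harmonicAt_log_norm hwc).const_smul)
  · refine (hc.mono fun w hw => ⟨(hcl hw).1, hne w hw⟩).add (continuousOn_const.mul ?_)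
    exact ContinuousOn.log (by fun_prop) fun w hw => norm_ne_zero_iff.2 (sub_ne_zero.2 (hne w hw))
  · intro w hw
    rw [hΩ'.frontier_eq] at hw
    obtain ⟨⟨hwΩ, hwρ⟩, hwΩ'⟩ := And.imp_left (@hcl w) hw
    by_cases hwin : w ∈ Ω
    · have hwρ' : ‖w - c‖ = ρ := le_antisymm (not_lt.1 fun h => hwΩ' ⟨hwin, h⟩) hwρ
      rw [hwρ']
      linarith [hM w hwin]
    · have hfw := hC w (hΩ.frontier_eq ▸ ⟨hwΩ, hwin⟩) (hne w hw.1)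
      have := Real.log_le_log (hρ0.trans_le hwρ) (by simpa [dist_eq_norm] using hL hwΩ)
      nlinarith

theorem InnerProductSpace.HarmonicOnNhd.le_of_forall_mem_frontier_ne_le {f : ℂ → ℝ} {Ω : Set ℂ}
    {c : ℂ} {C M : ℝ} (hΩ : IsOpen Ω) (hb : Bornology.IsBounded Ω) (hcΩ : c ∉ Ω)
    (hf : HarmonicOnNhd f Ω) (hc : ContinuousOn f (closure Ω \ {c})) (hM : ∀ z ∈ Ω, f z ≤ M)
    (hC : ∀ z ∈ frontier Ω, z ≠ c → f z ≤ C) {z : ℂ} (hz : z ∈ Ω) : f z ≤ C := by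
  obtain ⟨L, hL⟩ := hb.closure.subset_closedBall c
  have htend : Tendsto (fun η => C + η * (Real.log L - Real.log ‖z - c‖)) (𝓝[>] 0) (𝓝 C) :=
    ((continuous_const.add (continuous_id.mul continuous_const)).tendsto' 0 C (by simp)).mono_left
      nhdsWithin_le_nhds
  refine ge_of_tendsto htend ?_
  filter_upwards [self_mem_nhdsWithin] with η hη
  have := hf.add_mul_log_le_of_forall_mem_frontier_le hΩ hb hc hM hC hL hη hz
    (ne_of_mem_of_not_mem hz hcΩ)
  linarith

theorem abs_le_add_im_of_harmonicOnNhd_box {u : ℂ → ℝ} {R H M δ : ℝ} (hR : 0 < R) (hH : 0 < H)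
    (hu : HarmonicOnNhd u (Ioo (-R) R ×ℂ Ioo 0 H))
    (hc : ContinuousOn u (Icc (-R) R ×ℂ Icc 0 H \ {0}))
    (hM : ∀ w ∈ Icc (-R) R ×ℂ Ioc 0 H, |u w| ≤ M)
    (hbot : ∀ x ∈ Icc (-R) R, x ≠ 0 → u x = 0)
    (hside : ∀ w ∈ ({-R, R} : Set ℝ) ×ℂ Icc 0 H, |u w| ≤ δ)
    {w : ℂ} (hw : w ∈ Ioo (-R) R ×ℂ Ioo 0 H) : |u w| ≤ δ + M / H * w.im := by
  have hR' : -R < R := by linarith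
  have hM0 : 0 ≤ M := (abs_nonneg _).trans (hM (H * I) (by simp [mem_reProdIm, hR.le, hH]))
  have hδ0 : 0 ≤ δ := (abs_nonneg _).trans (hside R (by simp [mem_reProdIm, hH.le]))
  have him : HarmonicOnNhd (fun w : ℂ => w.im) univ := fun w _ => analyticAt_id.harmonicAt_im
  suffices key : ∀ s : ℝ, |s| = 1 → s * u w - M / H * w.im ≤ δ by
    have h₁ := key 1 (by simp)
    have h₂ := key (-1) (by simp)
    rw [abs_le]; constructor <;> linarith
  intro s hs
  have hsu : ∀ z, s * u z ≤ |u z| := fun z => by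
    simpa [abs_mul, hs] using le_abs_self (s * u z)
  refine HarmonicOnNhd.le_of_forall_mem_frontier_ne_le (f := fun z => s * u z - M / H * z.im)
    (c := 0) (M := M) (isOpen_Ioo.reProdIm isOpen_Ioo)
    ((Metric.isBounded_Ioo _ _).reProdIm (Metric.isBounded_Ioo _ _))
    (fun h0 => by simpa using h0.2.1) ?_ ?_ ?_ ?_ hw
  · exact fun z hz => ((hu z hz).const_smul (c := s)).sub ((him z trivial).const_smul (c := M / H))
  · rw [closure_Ioo_reProdIm_Ioo hR' hH]
    exact (continuousOn_const.mul hc).sub (continuousOn_const.mul (by fun_prop))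
  · intro z hz
    have := hM z ⟨Ioo_subset_Icc_self hz.1, Ioo_subset_Ioc_self hz.2⟩
    have : 0 ≤ M / H * z.im := by have := hz.2.1; positivity
    linarith [hsu z]
  · intro z hz hz0
    rw [frontier_Ioo_reProdIm_Ioo hR' hH] at hz
    have hbarrier : 0 ≤ M / H * z.im := by
      have : 0 ≤ z.im := by rcases hz with ⟨-, hz | hz⟩ | ⟨-, hz⟩ <;> simp_all [hH.le]
      positivity
    rcases hz with ⟨hre, him0 | himH⟩ | hz
    · have him0 : z.im = 0 := him0
      rw [eq_ofReal_re_of_im_eq_zero him0] at hz0 ⊢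
      simp [hbot z.re hre (by exact_mod_cast hz0), hδ0]
    · have hzH : z.im = H := himH
      have := hM z ⟨hre, by simp [hzH, hH]⟩
      rw [hzH, div_mul_cancel₀ _ hH.ne']
      linarith [hsu z]
    · linarith [hsu z, hside z hz]

theorem isOpen_UHP : IsOpen UHP := isOpen_lt continuous_const continuous_im

theorem UHP_subset_slitPlane : UHP ⊆ slitPlane := fun _ hw => Or.inr hw.ne'

theorem mem_UHP_union_of_abs_re_lt {ε : ℝ} {w : ℂ} (him : 0 ≤ w.im) (hw : w ≠ 0)
    (hre : |w.re| < ε) : w ∈ UHP ∪ ofReal '' (Ioo (-ε) 0 ∪ Ioo 0 ε) := by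
  rcases him.lt_or_eq with him | him
  · exact Or.inl him
  · rw [eq_ofReal_re_of_im_eq_zero him.symm] at hw ⊢
    exact Or.inr ⟨w.re, mem_Ioo_union_Ioo_of_abs_lt (by exact_mod_cast hw) hre, rfl⟩

theorem exists_forall_mem_sides_abs_le {u : ℂ → ℝ} {ε R δ : ℝ} (hR : 0 < R) (hRε : R < ε)
    (hδ : 0 < δ) (hc : ContinuousOn u (UHP ∪ ofReal '' (Ioo (-ε) 0 ∪ Ioo 0 ε)))
    (h0 : ∀ x ∈ Ioo (-ε) 0 ∪ Ioo 0 ε, u x = 0) :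
    ∃ H > 0, ∀ w ∈ ({-R, R} : Set ℝ) ×ℂ Icc 0 H, |u w| ≤ δ := by
  have hcorner : ∀ x : ℝ, |x| = R →
      ∃ r > 0, ∀ w ∈ UHP ∪ ofReal '' (Ioo (-ε) 0 ∪ Ioo 0 ε), dist w x < r → |u w| < δ := by
    intro x hx
    have hx0 : x ≠ 0 := by rintro rfl; simp at hx; linarith
    have hpx := mem_Ioo_union_Ioo_of_abs_lt hx0 (hx ▸ hRε)
    obtain ⟨r, hr, hball⟩ := Metric.continuousWithinAt_iff.1 (hc x (Or.inr ⟨x, hpx, rfl⟩)) δ hδ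
    exact ⟨r, hr, fun w hw hwx => by simpa [h0 x hpx] using hball hw hwx⟩
  obtain ⟨r₁, hr₁, h₁⟩ := hcorner R (abs_of_pos hR)
  obtain ⟨r₂, hr₂, h₂⟩ := hcorner (-R) (by simp [abs_of_pos hR])
  refine ⟨min r₁ r₂ / 2, by positivity, ?_⟩
  rintro w ⟨hwre, hwim⟩
  have hwR : |w.re| = R := by
    rcases hwre with h | h
    · rw [h, abs_neg, abs_of_pos hR]
    · rw [h, abs_of_pos hR]
  have hwS := mem_UHP_union_of_abs_re_lt hwim.1 (fun h => by simp [h] at hwR; linarith)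
    (hwR ▸ hRε)
  have hdist : dist w (w.re : ℂ) < min r₁ r₂ := by
    rw [Complex.dist_of_re_eq (by simp)]
    simpa [abs_of_nonneg hwim.1] using hwim.2.trans_lt (half_lt_self (lt_min hr₁ hr₂))
  rcases hwre with h | h <;> rw [h] at hdist
  · exact (h₂ w hwS (hdist.trans_le (min_le_right _ _))).le
  · exact (h₁ w hwS (hdist.trans_le (min_le_left _ _))).le

theorem tendsto_nhdsWithin_UHP_zero_of_harmonicOnNhd {u : ℂ → ℝ} {ε M : ℝ} (hε : 0 < ε)
    (hu : HarmonicOnNhd u UHP) (hM : ∀ w ∈ UHP, |u w| ≤ M)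
    (hc : ContinuousOn u (UHP ∪ ofReal '' (Ioo (-ε) 0 ∪ Ioo 0 ε)))
    (h0 : ∀ x ∈ Ioo (-ε) 0 ∪ Ioo 0 ε, u x = 0) :
    Tendsto u (𝓝[UHP] 0) (𝓝 0) := by
  set R := ε / 2
  have hR : 0 < R := half_pos hε
  have hre : ∀ x ∈ Icc (-R) R, |x| < ε := fun x hx => (abs_le.2 hx).trans_lt (half_lt_self hε)
  rw [Metric.tendsto_nhds]
  intro δ hδ
  obtain ⟨H, hH, hside⟩ :=
    exists_forall_mem_sides_abs_le hR (half_lt_self hε) (by positivity : 0 < δ / 3) hc h0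
  have hbox : ∀ w ∈ Ioo (-R) R ×ℂ Ioo 0 H, |u w| ≤ δ / 3 + M / H * w.im :=
    fun w hw => abs_le_add_im_of_harmonicOnNhd_box hR hH (hu.mono fun z hz => hz.2.1)
      (hc.mono fun z hz => mem_UHP_union_of_abs_re_lt hz.1.2.1 hz.2 (hre _ hz.1.1))
      (fun z hz => hM z hz.2.1)
      (fun x hx hx0 => h0 x (mem_Ioo_union_Ioo_of_abs_lt hx0 (hre x hx))) hside hw
  have hev : ∀ᶠ w in 𝓝 (0 : ℂ), w.re ∈ Ioo (-R) R ∧ w.im < H ∧ M / H * w.im < δ / 3 := by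
    refine (continuous_re.tendsto 0).eventually (Ioo_mem_nhds (by simp; linarith) (by simpa)) |>.and
      (((continuous_im.tendsto 0).eventually (gt_mem_nhds (by simpa))).and ?_)
    have : Tendsto (fun w : ℂ => M / H * w.im) (𝓝 0) (𝓝 0) := by
      simpa using (continuous_im.tendsto 0).const_mul (M / H)
    exact this.eventually (gt_mem_nhds (by positivity))
  filter_upwards [nhdsWithin_le_nhds hev, self_mem_nhdsWithin] with w ⟨hwre, hwH, hwM⟩ hw
  rw [Real.dist_0_eq_abs]
  linarith [hbox w ⟨hwre, hw, hwH⟩]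

noncomputable def stepHarmonic (a b : ℝ) (w : ℂ) : ℝ :=
  a * (arg w / π) + b * (1 - arg w / π)

theorem harmonicOnNhd_stepHarmonic (a b : ℝ) : HarmonicOnNhd (stepHarmonic a b) slitPlane := by
  intro w hw
  have h := (harmonicAt_const b).add
    (((analyticAt_clog hw).harmonicAt_im).const_smul (c := (a - b) / π))
  refine (harmonicAt_congr_nhds (Eventually.of_forall fun z => ?_)).1 h
  simp only [stepHarmonic, Pi.add_apply, Pi.smul_apply, smul_eq_mul, log_im]
  ring

theorem continuousOn_stepHarmonic (a b : ℝ) :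
    ContinuousOn (stepHarmonic a b) ({w | 0 ≤ w.im} \ {0}) := by
  have harg : ContinuousOn arg ({w : ℂ | 0 ≤ w.im} \ {0}) := fun z hz =>
    (continuousWithinAt_arg_of_ne_zero hz.2).mono sdiff_subset
  unfold stepHarmonic
  fun_prop

theorem stepHarmonic_ofReal_of_pos (a b : ℝ) {x : ℝ} (hx : 0 < x) : stepHarmonic a b x = b := by
  simp [stepHarmonic, arg_ofReal_of_nonneg hx.le]

theorem stepHarmonic_ofReal_of_neg (a b : ℝ) {x : ℝ} (hx : x < 0) : stepHarmonic a b x = a := by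
  simp [stepHarmonic, arg_ofReal_of_neg hx, Real.pi_ne_zero]

theorem stepHarmonic_mem_uIcc (a b : ℝ) {w : ℂ} (hw : 0 ≤ w.im) :
    stepHarmonic a b w ∈ uIcc a b := by
  have h0 : 0 ≤ arg w / π := div_nonneg (arg_nonneg_iff.2 hw) Real.pi_pos.le
  have h1 : arg w / π ≤ 1 := (div_le_one Real.pi_pos).2 (arg_le_pi w)
  rw [uIcc_comm, ← segment_eq_uIcc]
  exact ⟨1 - arg w / π, arg w / π, by linarith, h0, by ring, by simp [stepHarmonic]; ring⟩

theorem tendsto_sub_stepHarmonic {ε a b : ℝ} {t : ℂ → ℝ} (hε : 0 < ε) (ht : HarmonicOn t UHP)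
    (htbd : ∃ M : ℝ, ∀ w ∈ UHP, |t w| ≤ M)
    (htc : ContinuousOn t (UHP ∪ ofReal '' (Ioo (-ε) 0 ∪ Ioo 0 ε)))
    (hta : ∀ s ∈ Ioo (-ε) 0, t s = a) (htb : ∀ s ∈ Ioo 0 ε, t s = b) :
    Tendsto (fun w => t w - stepHarmonic a b w) (𝓝[UHP] 0) (𝓝 0) := by
  obtain ⟨M, hM⟩ := htbd
  refine tendsto_nhdsWithin_UHP_zero_of_harmonicOnNhd (M := M + (|a| + |b|)) hε
    ((ht.harmonicOnNhd isOpen_UHP).sub ((harmonicOnNhd_stepHarmonic a b).mono UHP_subset_slitPlane))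
    (fun w hw => ?_) (htc.sub ((continuousOn_stepHarmonic a b).mono ?_)) ?_
  · have hs := stepHarmonic_mem_uIcc a b (le_of_lt hw)
    have : |stepHarmonic a b w| ≤ |a| + |b| := by
      rw [mem_uIcc] at hs
      rw [abs_le]
      rcases hs with ⟨h1, h2⟩ | ⟨h1, h2⟩ <;> constructor <;>
        linarith [neg_abs_le a, neg_abs_le b, le_abs_self a, le_abs_self b]
    linarith [abs_sub (t w) (stepHarmonic a b w), hM w hw]
  · rintro w (hw | ⟨x, hx, rfl⟩)
    · exact ⟨show 0 ≤ w.im from le_of_lt hw, by rintro rfl; simp [UHP] at hw⟩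
    · refine ⟨by simp, ?_⟩
      rcases hx with hx | hx <;> simp [hx.1.ne', hx.2.ne]
  · rintro x (hx | hx)
    · simp [hta x hx, stepHarmonic_ofReal_of_neg a b hx.2]
    · simp [htb x hx, stepHarmonic_ofReal_of_pos a b hx.1]

theorem tendsto_ray_nhdsWithin_UHP {θ : ℝ} (hθ : θ ∈ Ioo 0 π) :
    Tendsto (fun r : ℝ => (r : ℂ) * exp (θ * I)) (𝓝[>] 0) (𝓝[UHP] 0) := by
  refine tendsto_nhdsWithin_iff.2 ⟨?_, ?_⟩
  · exact ((continuous_ofReal.mul continuous_const).tendsto' 0 0 (by simp)).mono_left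
      nhdsWithin_le_nhds
  · filter_upwards [self_mem_nhdsWithin] with r (hr : 0 < r)
    show 0 < ((r : ℂ) * exp (θ * I)).im
    rw [im_ofReal_mul, exp_ofReal_mul_I_im]
    exact mul_pos hr (Real.sin_pos_of_pos_of_lt_pi hθ.1 hθ.2)

theorem stepHarmonic_ray (a b : ℝ) {θ r : ℝ} (hθ : θ ∈ Ioc (-π) π) (hr : 0 < r) :
    stepHarmonic a b (r * exp (θ * I)) = a * (θ / π) + b * (1 - θ / π) := by
  rw [stepHarmonic, arg_real_mul _ hr, exp_mul_I, arg_cos_add_sin_mul_I hθ]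

theorem tendsto_ray_of_tendsto_sub_stepHarmonic {t : ℂ → ℝ} {a b θ : ℝ}
    (ht : Tendsto (fun w => t w - stepHarmonic a b w) (𝓝[UHP] 0) (𝓝 0)) (hθ : θ ∈ Ioo 0 π) :
    Tendsto (fun r : ℝ => t (r * exp (θ * I))) (𝓝[>] 0) (𝓝 (a * (θ / π) + b * (1 - θ / π))) := by
  have := (ht.comp (tendsto_ray_nhdsWithin_UHP hθ)).add_const (a * (θ / π) + b * (1 - θ / π))
  rw [zero_add] at this
  refine this.congr' ?_
  filter_upwards [self_mem_nhdsWithin] with r hr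
  simp [stepHarmonic_ray a b ⟨by linarith [hθ.1, Real.pi_pos], hθ.2.le⟩ hr]

theorem uIcc_subset_closure_image_Ioo_zero_pi (a b : ℝ) :
    uIcc a b ⊆ closure ((fun θ => a * (θ / π) + b * (1 - θ / π)) '' Ioo 0 π) := by
  simpa [uIcc_comm, Real.pi_ne_zero] using
    uIcc_subset_closure_image_Ioo (f := fun θ => a * (θ / π) + b * (1 - θ / π)) (by fun_prop)
      Real.pi_pos

theorem cluster_set_is_isotropic_line_general
    (ε : ℝ) (hε : 0 < ε) (a b : ℝ) (z₀ : ℂ)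
    (h : ℂ → ℂ) (t : ℂ → ℝ)
    (hhc : ContinuousOn h (UHP ∪ (Complex.ofReal '' Set.Ioo (-ε) ε)))
    (hz₀ : h 0 = z₀)
    (ht : HarmonicOn t UHP)
    (htbd : ∃ M : ℝ, ∀ w ∈ UHP, |t w| ≤ M)
    (htc : ContinuousOn t
      (UHP ∪ (Complex.ofReal '' (Set.Ioo (-ε) 0 ∪ Set.Ioo 0 ε))))
    (hta : ∀ s ∈ Set.Ioo (-ε) 0, t (s : ℂ) = a)
    (htb : ∀ s ∈ Set.Ioo 0 ε, t (s : ℂ) = b) :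
    (∀ θ ∈ Set.Ioo 0 Real.pi,
      Tendsto (fun r : ℝ =>
          (h ((r : ℂ) * Complex.exp ((θ : ℂ) * Complex.I)),
           t ((r : ℂ) * Complex.exp ((θ : ℂ) * Complex.I))))
        (𝓝[>] 0)
        (𝓝 (z₀, a * (θ / Real.pi) + b * (1 - θ / Real.pi)))) ∧
    {p : ℂ × ℝ | ∃ u : ℕ → ℂ, (∀ n, u n ∈ UHP) ∧
        Tendsto u atTop (𝓝 0) ∧
        Tendsto (fun n => (h (u n), t (u n))) atTop (𝓝 p)} =
      {z₀} ×ˢ Set.Icc (min a b) (max a b) := by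
  have hh0 : Tendsto h (𝓝[UHP] 0) (𝓝 z₀) :=
    hz₀ ▸ ((hhc 0 (Or.inr ⟨0, ⟨neg_lt_zero.2 hε, hε⟩, ofReal_zero⟩)).mono subset_union_left).tendsto
  have ht0 := tendsto_sub_stepHarmonic hε ht htbd htc hta htb
  have hray : ∀ θ ∈ Ioo 0 π, Tendsto (fun r : ℝ => (h (r * exp (θ * I)), t (r * exp (θ * I))))
      (𝓝[>] 0) (𝓝 (z₀, a * (θ / π) + b * (1 - θ / π))) := fun θ hθ =>
    (hh0.comp (tendsto_ray_nhdsWithin_UHP hθ)).prodMk_nhds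
      (tendsto_ray_of_tendsto_sub_stepHarmonic ht0 hθ)
  refine ⟨hray, subset_antisymm ?_ fun p hp => ?_⟩
  · rintro p ⟨u, hu, hu0, hX⟩
    have hu' : Tendsto u atTop (𝓝[UHP] 0) := tendsto_nhdsWithin_iff.2 ⟨hu0, .of_forall hu⟩
    have hstep : Tendsto (fun n => stepHarmonic a b (u n)) atTop (𝓝 p.2) := by
      simpa using hX.snd_nhds.sub (ht0.comp hu')
    exact ⟨tendsto_nhds_unique hX.fst_nhds (hh0.comp hu'), isClosed_Icc.mem_of_tendsto hstep
      (.of_forall fun n => stepHarmonic_mem_uIcc a b (hu n).le)⟩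
  · refine MapClusterPt.exists_seq_of_nhdsWithin (X := fun w => (h w, t w)) <|
      isClosed_setOfPred_clusterPt.closure_subset_iff.2 ?_
      (?_ : p ∈ closure ({z₀} ×ˢ ((fun θ => a * (θ / π) + b * (1 - θ / π)) '' Ioo 0 π)))
    · rintro ⟨z, y⟩ ⟨rfl : z = z₀, θ, hθ, rfl⟩
      exact ((hray θ hθ).mapClusterPt).of_comp (tendsto_ray_nhdsWithin_UHP hθ)
    · rw [closure_prod_eq, closure_singleton]
      exact ⟨hp.1, uIcc_subset_closure_image_Ioo_zero_pi a b hp.2⟩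

/-- **The isotropic line as the cluster set of the surface at the jump point.**
With `h` injective holomorphic on `ℍ`, continuous up to `(-ε,ε)` with `h(0) = z₀`, and `t`
bounded harmonic on `ℍ`, continuous up to `(-ε,0) ∪ (0,ε)` with `t ≡ a` on `(-ε,0)` and
`t ≡ b` on `(0,ε)`, the map `X = (h,t)` satisfies: for each `θ ∈ (0,π)`,
`X(r e^{iθ}) → (z₀, a·θ/π + b·(1-θ/π))` as `r ↓ 0`; consequently the cluster set
`C(X,0)` equals the isotropic segment `L = {z₀} × [min a b, max a b]`. -/
theorem cluster_set_is_isotropic_line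
    (ε : ℝ) (hε : 0 < ε) (a b : ℝ) (hab : a ≠ b) (z₀ : ℂ)
    (h : ℂ → ℂ) (t : ℂ → ℝ)
    (hh : DifferentiableOn ℂ h UHP)
    (hhinj : Set.InjOn h UHP)
    (hhc : ContinuousOn h (UHP ∪ (Complex.ofReal '' Set.Ioo (-ε) ε)))
    (hz₀ : h 0 = z₀)
    (ht : HarmonicOn t UHP)
    (htbd : ∃ M : ℝ, ∀ w ∈ UHP, |t w| ≤ M)
    (htc : ContinuousOn t
      (UHP ∪ (Complex.ofReal '' (Set.Ioo (-ε) 0 ∪ Set.Ioo 0 ε))))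
    (hta : ∀ s ∈ Set.Ioo (-ε) 0, t (s : ℂ) = a)
    (htb : ∀ s ∈ Set.Ioo 0 ε, t (s : ℂ) = b) :
    (∀ θ ∈ Set.Ioo 0 Real.pi,
      Tendsto (fun r : ℝ =>
          (h ((r : ℂ) * Complex.exp ((θ : ℂ) * Complex.I)),
           t ((r : ℂ) * Complex.exp ((θ : ℂ) * Complex.I))))
        (𝓝[>] 0)
        (𝓝 (z₀, a * (θ / Real.pi) + b * (1 - θ / Real.pi)))) ∧
    {p : ℂ × ℝ | ∃ u : ℕ → ℂ, (∀ n, u n ∈ UHP) ∧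
        Tendsto u atTop (𝓝 0) ∧
        Tendsto (fun n => (h (u n), t (u n))) atTop (𝓝 p)} =
      {z₀} ×ˢ Set.Icc (min a b) (max a b) :=
  cluster_set_is_isotropic_line_general ε hε a b z₀ h t hhc hz₀ ht htbd htc hta htb
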